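/- arXiv:2407.20526 — 2 statements merged into one kernel-verified Lean document; each statement's English description precedes it below -/
import Mathlib

section
/- Let H_1 (r_1×n_1), H_2 (r_2×n_2) be matrices over F_2, H_X = (H_1 ⊗ I_{n_2} | I_{r_1} ⊗ H_2^T). Let L = (x̄ ⊗ e_α, 0) with x̄ ∈ ker(H_1), x̄ ≠ 0, and e_α ∉ Im(H_2^T). Then the energy barrier satisfies Δ_{H_X}(L) ≥ Δ_{H_1}(x̄). Combined with the matching upper bound, Δ_{H_X}(L) = Δ_{H_1}(x̄). -/
/-!
A linear map `Φ` between configuration spaces that turns a single bit flip into at most one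
bit flip and does not raise the energy carries flip paths from `0` to `s` to flip paths from
`0` to `Φ s`, so the barrier of `Φ s` is at most that of `s`.

Lower bound: since `e_α ∉ Im H₂ᵀ = (ker H₂)^⊥`, some `c ∈ ker H₂` has `c_α = 1`; take
`Φ (z¹, z²) = Z¹ c`, where `Z¹` is `z¹` read as an `n₁ × n₂` matrix. The syndrome of `z`,
read as an `r₁ × n₂` matrix, is `H₁ Z¹ + Z² H₂`, so multiplying it by `c` gives `H₁ (Z¹ c)`,
and `Φ (x̄ ⊗ e_α, 0) = x̄`. Upper bound: take `Φ u = (u ⊗ e_α, 0)`.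
-/

open Matrix Kronecker

/-- Hamming weight of a vector over `ZMod 2`. -/
def wt {α : Type*} [Fintype α] (v : α → ZMod 2) : ℕ :=
  (Finset.univ.filter fun i => v i ≠ 0).card

/-- Number of nonzero entries of a matrix over `ZMod 2`. -/
def mwt {α β : Type*} [Fintype α] [Fintype β] (M : Matrix α β (ZMod 2)) : ℕ :=
  (Finset.univ.filter fun p : α × β => M p.1 p.2 ≠ 0).card

/-- Energy barrier of a vector `s` w.r.t. parity check matrix `H`: the minimum over
single-bit-flip paths from `0` to `s` of the maximum energy `wt (H·v)` along the path. -/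
noncomputable def eb {α β : Type*} [Fintype α] [Fintype β] (H : Matrix α β (ZMod 2)) (s : β → ZMod 2) : ℕ :=
  sInf {B | ∃ F : ℕ, ∃ v : Fin (F + 1) → β → ZMod 2,
    v 0 = 0 ∧ v (Fin.last F) = s ∧
    (∀ i : Fin F, wt (v i.castSucc + v i.succ) ≤ 1) ∧
    ∀ i, wt (H.mulVec (v i)) ≤ B}

/-- Energy barrier of a classical code: minimum of `eb` over nonzero codewords. -/
noncomputable def codeEB {α β : Type*} [Fintype α] [Fintype β] (M : Matrix α β (ZMod 2)) : ℕ :=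
  sInf {E | ∃ c, c ≠ 0 ∧ M.mulVec c = 0 ∧ eb M c = E}

/-- The X-type parity check matrix of the hypergraph product code. -/
def HX {r1 n1 r2 n2 : ℕ} (H1 : Matrix (Fin r1) (Fin n1) (ZMod 2))
    (H2 : Matrix (Fin r2) (Fin n2) (ZMod 2)) :
    Matrix (Fin r1 × Fin n2) ((Fin n1 × Fin n2) ⊕ (Fin r1 × Fin r2)) (ZMod 2) :=
  Matrix.fromCols (H1 ⊗ₖ (1 : Matrix (Fin n2) (Fin n2) (ZMod 2)))
    ((1 : Matrix (Fin r1) (Fin r1) (ZMod 2)) ⊗ₖ H2ᵀ)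

section Weight

variable {ι κ : Type*} [Fintype ι] [Fintype κ]

lemma wt_sumElim (f : ι → ZMod 2) (g : κ → ZMod 2) : wt (Sum.elim f g) = wt f + wt g := by
  classical
  unfold wt
  rw [← Finset.card_disjSum]
  congr 1
  ext (i | k) <;> simp

lemma wt_comp_inl_le (z : ι ⊕ κ → ZMod 2) : wt (z ∘ Sum.inl) ≤ wt z := by
  conv_rhs => rw [← Sum.elim_comp_inl_inr z, wt_sumElim]
  exact Nat.le_add_right _ _

lemma wt_ite_snd [DecidableEq ι] (u : κ → ZMod 2) (b : ι) :
    wt (fun p : κ × ι => if p.2 = b then u p.1 else 0) = wt u := by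
  classical
  unfold wt
  rw [← Finset.card_image_of_injective (Finset.univ.filter fun k => u k ≠ 0)
    (Prod.mk_left_injective b)]
  congr 1
  ext ⟨k, i⟩
  by_cases hi : i = b <;> simp [hi, Ne.symm]

lemma mwt_of_curry (v : κ × ι → ZMod 2) : mwt (of (Function.curry v)) = wt v := rfl

lemma wt_mulVec_le_mwt (M : Matrix κ ι (ZMod 2)) (c : ι → ZMod 2) : wt (M *ᵥ c) ≤ mwt M := by
  classical
  have hsub : (Finset.univ.filter fun k => (M *ᵥ c) k ≠ 0) ⊆
      (Finset.univ.filter fun p : κ × ι => M p.1 p.2 ≠ 0).image Prod.fst := by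
    intro k hk
    simp only [Finset.mem_filter, Finset.mem_univ, true_and] at hk
    obtain ⟨i, -, hi⟩ := Finset.exists_ne_zero_of_sum_ne_zero hk
    exact Finset.mem_image.2 ⟨(k, i), by simpa using left_ne_zero_of_mul hi, rfl⟩
  exact (Finset.card_le_card hsub).trans Finset.card_image_le

end Weight

section EnergyBarrier

variable {ι κ ι' κ' : Type*} [Fintype ι] [Fintype κ] [Fintype ι'] [Fintype κ']

lemma exists_flip_path (s : ι → ZMod 2) :
    ∃ F : ℕ, ∃ v : Fin (F + 1) → ι → ZMod 2, v 0 = 0 ∧ v (Fin.last F) = s ∧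
      ∀ i : Fin F, wt (v i.castSucc + v i.succ) ≤ 1 := by
  classical
  let e := Fintype.equivFin ι
  refine ⟨Fintype.card ι, fun i b => if (e b : ℕ) < i then s b else 0, ?_, ?_, fun i => ?_⟩
  · funext b; simp
  · funext b; simp [(e b).isLt]
  · refine Finset.card_le_one.2 fun a ha b hb => ?_
    have hflip : ∀ x, (if (e x : ℕ) < i then s x else 0) +
        (if (e x : ℕ) < i + 1 then s x else 0) ≠ 0 → (e x : ℕ) = i := by
      intro x hx
      by_contra hne
      by_cases hlt : (e x : ℕ) < i
      · rw [if_pos hlt, if_pos (by omega), CharTwo.add_self_eq_zero] at hx; exact hx rfl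
      · rw [if_neg hlt, if_neg (by omega), add_zero] at hx; exact hx rfl
    simp only [Finset.mem_filter, Finset.mem_univ, true_and, Pi.add_apply, Fin.val_castSucc,
      Fin.val_succ] at ha hb
    exact e.injective (Fin.ext ((hflip a ha).trans (hflip b hb).symm))

lemma eb_map_le (H : Matrix κ ι (ZMod 2)) (H' : Matrix κ' ι' (ZMod 2))
    (Φ : (ι → ZMod 2) →+ (ι' → ZMod 2)) (s : ι → ZMod 2)
    (hstep : ∀ w, wt w ≤ 1 → wt (Φ w) ≤ 1) (henergy : ∀ z, wt (H' *ᵥ Φ z) ≤ wt (H *ᵥ z)) :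
    eb H' (Φ s) ≤ eb H s := by
  obtain ⟨F, v, hv0, hvs, hvstep, hvB⟩ : eb H s ∈ {B | ∃ F : ℕ, ∃ v : Fin (F + 1) → ι → ZMod 2,
      v 0 = 0 ∧ v (Fin.last F) = s ∧ (∀ i : Fin F, wt (v i.castSucc + v i.succ) ≤ 1) ∧
      ∀ i, wt (H *ᵥ v i) ≤ B} := by
    obtain ⟨F, v, hv0, hvs, hvstep⟩ := exists_flip_path s
    exact Nat.sInf_mem ⟨Fintype.card κ, F, v, hv0, hvs, hvstep, fun _ => Finset.card_le_univ _⟩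
  refine Nat.sInf_le ⟨F, fun i => Φ (v i), (congrArg Φ hv0).trans (map_zero Φ), congrArg Φ hvs,
    fun i => ?_, fun i => (henergy (v i)).trans (hvB i)⟩
  rw [← map_add]
  exact hstep _ (hvstep i)

end EnergyBarrier

lemma exists_mulVec_eq_zero_apply_eq_one {K m n : Type*} [Field K] [Fintype m] [Fintype n]
    [DecidableEq m] [DecidableEq n] (A : Matrix m n K) (a : n)
    (ha : ¬ ∃ c, Aᵀ *ᵥ c = Pi.single a 1) :
    ∃ L, A *ᵥ L = 0 ∧ L a = 1 := by
  obtain ⟨f, hfa, hrange⟩ := Submodule.exists_le_ker_of_notMem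
    (p := LinearMap.range Aᵀ.mulVecLin) (v := Pi.single a 1) fun ⟨c, hc⟩ => ha ⟨c, hc⟩
  set L := (dotProductEquiv K n).symm f
  have hf : ∀ x, f x = L ⬝ᵥ x := fun x => by
    rw [← dotProductEquiv_apply_apply, LinearEquiv.apply_symm_apply]
  -- `(A L) ⬝ᵥ y = L ⬝ᵥ (Aᵀ y) = f (Aᵀ y) = 0` for every `y`
  have hAL : A *ᵥ L = 0 := by
    funext i
    have hy := hrange (LinearMap.mem_range_self Aᵀ.mulVecLin (Pi.single i 1))
    rw [LinearMap.mem_ker, Matrix.mulVecLin_apply, hf, dotProduct_mulVec, vecMul_transpose,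
      dotProduct_single_one] at hy
    exact hy
  have hLa : L a ≠ 0 := by rwa [hf, dotProduct_single_one] at hfa
  exact ⟨(L a)⁻¹ • L, by rw [mulVec_smul, hAL, smul_zero], by simp [hLa]⟩

section Columns

variable {R ι κ ρ : Type*} [Semiring R]

def columnEmbedding [DecidableEq ι] (b : ι) : (κ → R) →+ ((κ × ι) ⊕ ρ → R) where
  toFun u := Sum.elim (fun p => if p.2 = b then u p.1 else 0) 0
  map_zero' := by ext (p | p) <;> simp
  map_add' u v := by ext (⟨k, i⟩ | p) <;> simp [ite_add_ite]

@[simp]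
lemma columnEmbedding_apply [DecidableEq ι] (b : ι) (u : κ → R) :
    columnEmbedding (ρ := ρ) b u = Sum.elim (fun p => if p.2 = b then u p.1 else 0) 0 := rfl

variable [Fintype ι]

def columnContraction (c : ι → R) : ((κ × ι) ⊕ ρ → R) →+ (κ → R) where
  toFun z := of (Function.curry (z ∘ Sum.inl)) *ᵥ c
  map_zero' := zero_mulVec c
  map_add' _ _ := add_mulVec _ _ c

@[simp]
lemma columnContraction_apply (c : ι → R) (z : (κ × ι) ⊕ ρ → R) :
    columnContraction c z = of (Function.curry (z ∘ Sum.inl)) *ᵥ c := rfl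

lemma columnContraction_columnEmbedding [DecidableEq ι] {c : ι → R} {b : ι} (hc : c b = 1)
    (u : κ → R) : columnContraction (ρ := ρ) c (columnEmbedding b u) = u := by
  funext k
  simp [mulVec, dotProduct, hc]

variable [Fintype κ] [Fintype ρ]

lemma wt_columnEmbedding [DecidableEq ι] (b : ι) (u : κ → ZMod 2) :
    wt (columnEmbedding (ρ := ρ) b u) = wt u := by
  rw [columnEmbedding_apply, wt_sumElim, wt_ite_snd, Nat.add_eq_left]
  simp [wt]

lemma wt_columnContraction_le (c : ι → ZMod 2) (z : (κ × ι) ⊕ ρ → ZMod 2) :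
    wt (columnContraction c z) ≤ wt z :=
  ((wt_mulVec_le_mwt _ c).trans_eq (mwt_of_curry _)).trans (wt_comp_inl_le z)

end Columns

section HypergraphProduct

variable {r1 n1 r2 n2 : ℕ} (H1 : Matrix (Fin r1) (Fin n1) (ZMod 2))
  (H2 : Matrix (Fin r2) (Fin n2) (ZMod 2))

lemma of_curry_HX_mulVec (z : (Fin n1 × Fin n2) ⊕ (Fin r1 × Fin r2) → ZMod 2) :
    of (Function.curry (HX H1 H2 *ᵥ z)) =
      H1 * of (Function.curry (z ∘ Sum.inl)) + of (Function.curry (z ∘ Sum.inr)) * H2 := by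
  ext k b
  simp [HX, mulVec, dotProduct, mul_apply, Fintype.sum_prod_type, one_apply, mul_comm]

lemma HX_mulVec_columnEmbedding (b : Fin n2) (u : Fin n1 → ZMod 2) :
    HX H1 H2 *ᵥ columnEmbedding b u = fun p => if p.2 = b then (H1 *ᵥ u) p.1 else 0 := by
  funext ⟨k, i⟩
  refine (congrFun₂ (of_curry_HX_mulVec H1 H2 (columnEmbedding b u)) k i).trans ?_
  by_cases hi : i = b <;> simp [hi, mul_apply, mulVec, dotProduct]

lemma wt_mulVec_columnContraction_le {c : Fin n2 → ZMod 2} (hc : H2 *ᵥ c = 0)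
    (z : (Fin n1 × Fin n2) ⊕ (Fin r1 × Fin r2) → ZMod 2) :
    wt (H1 *ᵥ columnContraction c z) ≤ wt (HX H1 H2 *ᵥ z) := by
  have hHX : H1 *ᵥ columnContraction c z = of (Function.curry (HX H1 H2 *ᵥ z)) *ᵥ c := by
    rw [columnContraction_apply, of_curry_HX_mulVec, add_mulVec, ← mulVec_mulVec,
      ← mulVec_mulVec, hc, mulVec_zero, add_zero]
  rw [hHX]
  exact (wt_mulVec_le_mwt _ c).trans_eq (mwt_of_curry _)

end HypergraphProduct

theorem stmt13_general {r1 n1 r2 n2 : ℕ}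
    (H1 : Matrix (Fin r1) (Fin n1) (ZMod 2)) (H2 : Matrix (Fin r2) (Fin n2) (ZMod 2))
    (xbar : Fin n1 → ZMod 2)
    (α : Fin n2) (hα : ¬ ∃ c, H2ᵀ.mulVec c = Pi.single α 1) :
    eb H1 xbar ≤ eb (HX H1 H2)
        (Sum.elim (fun p : Fin n1 × Fin n2 => if p.2 = α then xbar p.1 else 0)
          (0 : Fin r1 × Fin r2 → ZMod 2)) ∧
    eb (HX H1 H2)
        (Sum.elim (fun p : Fin n1 × Fin n2 => if p.2 = α then xbar p.1 else 0)
          (0 : Fin r1 × Fin r2 → ZMod 2)) = eb H1 xbar := by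
  rw [← columnEmbedding_apply]
  obtain ⟨c, hc, hcα⟩ := exists_mulVec_eq_zero_apply_eq_one H2 α hα
  have lower : eb H1 xbar ≤ eb (HX H1 H2) (columnEmbedding α xbar) := by
    simpa only [columnContraction_columnEmbedding hcα] using
      eb_map_le (HX H1 H2) H1 (columnContraction c) (columnEmbedding α xbar)
        (fun w hw => (wt_columnContraction_le c w).trans hw)
        (wt_mulVec_columnContraction_le H1 H2 hc)
  have upper : eb (HX H1 H2) (columnEmbedding α xbar) ≤ eb H1 xbar :=
    eb_map_le H1 (HX H1 H2) (columnEmbedding α) xbar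
      (fun w hw => (wt_columnEmbedding α w).trans_le hw)
      (fun u => by rw [HX_mulVec_columnEmbedding, wt_ite_snd])
  exact ⟨lower, le_antisymm upper lower⟩

theorem stmt13 {r1 n1 r2 n2 : ℕ}
    (H1 : Matrix (Fin r1) (Fin n1) (ZMod 2)) (H2 : Matrix (Fin r2) (Fin n2) (ZMod 2))
    (xbar : Fin n1 → ZMod 2) (hx : H1.mulVec xbar = 0) (hxne : xbar ≠ 0)
    (α : Fin n2) (hα : ¬ ∃ c, H2ᵀ.mulVec c = Pi.single α 1) :
    eb H1 xbar ≤ eb (HX H1 H2)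
        (Sum.elim (fun p : Fin n1 × Fin n2 => if p.2 = α then xbar p.1 else 0)
          (0 : Fin r1 × Fin r2 → ZMod 2)) ∧
    eb (HX H1 H2)
        (Sum.elim (fun p : Fin n1 × Fin n2 => if p.2 = α then xbar p.1 else 0)
          (0 : Fin r1 × Fin r2 → ZMod 2)) = eb H1 xbar :=
  stmt13_general H1 H2 xbar α hα
end

section
/- Let H be an m×n matrix over F_2, s ∈ ker(H) with wt(s) = w. Order the support of s as i_1 < ... < i_w and let v_t = e_{i_1} + ... + e_{i_t} for 0 ≤ t ≤ w. Then this is a single-bit-flip path from 0 to s, and for every t, wt(H·v_t) ≤ min(t, w − t)·w_q ≤ ⌊w/2⌋·w_q, where w_q is the maximum column weight of H. In particular Δ(s) ≤ ⌊wt(s)/2⌋·w_q for any s ∈ ker(H). -/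
open Matrix Kronecker

/-- The partial-sum path: `pathOf g t` has a `1` exactly at the first `t` support
elements `g 0 < g 1 < ... < g (t-1)`. -/
def pathOf {n w : ℕ} (g : Fin w → Fin n) (t : ℕ) : Fin n → ZMod 2 :=
  fun i => if ∃ j : Fin w, (j : ℕ) < t ∧ g j = i then 1 else 0

/-! Every column of `H` has weight at most `w_q`, so `H *ᵥ v`, a sum of `wt v` columns, has weight
at most `wt v * w_q`. The partial sums `pathOf g t` of the support of a codeword `s` form a
single-bit-flip path from `0` to `s`, and since `H *ᵥ s = 0`, the syndrome of `pathOf g t` is also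
that of `s + pathOf g t`, of weight `w - t`. Hence the energy never exceeds
`min t (w - t) * w_q ≤ (w / 2) * w_q`. -/

open Finset

section Weight

variable {ι : Type*}

lemma wt_indicator_one [Fintype ι] (S : Finset ι) :
    wt ((S : Set ι).indicator (1 : ι → ZMod 2)) = #S := by
  classical
  unfold wt
  congr 1
  ext i
  by_cases hi : i ∈ S <;> simp [hi]

lemma indicator_one_add_indicator_one (S T : Set ι) :
    S.indicator (1 : ι → ZMod 2) + T.indicator 1 = (symmDiff S T).indicator 1 := by
  funext i
  by_cases hS : i ∈ S <;> by_cases hT : i ∈ T <;>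
    simp [Set.mem_symmDiff, hS, hT]; decide

lemma eq_indicator_one_of_support (v : ι → ZMod 2) (S : Finset ι) (h : ∀ i, v i ≠ 0 ↔ i ∈ S) :
    v = (S : Set ι).indicator 1 := by
  funext i
  by_cases hi : i ∈ S
  · have hone : ∀ x : ZMod 2, x ≠ 0 → x = 1 := by decide
    rw [Set.indicator_of_mem (mem_coe.2 hi), Pi.one_apply, hone _ ((h i).2 hi)]
  · simpa [hi] using mt (h i).1 hi

lemma wt_mulVec_le_mul [Fintype ι] {κ : Type*} [Fintype κ] (H : Matrix κ ι (ZMod 2)) {w_q : ℕ}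
    (hcol : ∀ j, wt (fun i => H i j) ≤ w_q) (v : ι → ZMod 2) :
    wt (H *ᵥ v) ≤ wt v * w_q := by
  classical
  have hsupp : ({i | (H *ᵥ v) i ≠ 0} : Finset κ) ⊆
      ({j | v j ≠ 0} : Finset ι).biUnion fun j => {i | H i j ≠ 0} := by
    intro i hi
    simp only [mem_filter, mem_univ, true_and, mem_biUnion] at hi ⊢
    obtain ⟨j, -, hj⟩ := exists_ne_zero_of_sum_ne_zero hi
    exact ⟨j, right_ne_zero_of_mul hj, left_ne_zero_of_mul hj⟩
  calc wt (H *ᵥ v) ≤ ∑ j ∈ ({j | v j ≠ 0} : Finset ι), wt (fun i => H i j) :=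
        (card_le_card hsupp).trans card_biUnion_le
    _ ≤ wt v * w_q := by
        rw [wt, ← smul_eq_mul, ← sum_const]
        exact sum_le_sum fun j _ => hcol j

end Weight

section PartialSumPath

variable {n w : ℕ} {g : Fin w → Fin n}

lemma pathOf_zero (g : Fin w → Fin n) : pathOf g 0 = 0 := by
  funext i
  simp [pathOf]

lemma pathOf_eq_indicator_one (g : Fin w → Fin n) (t : ℕ) :
    pathOf g t = (↑(({j | (j : ℕ) < t} : Finset (Fin w)).image g) : Set (Fin n)).indicator 1 := by
  funext i
  by_cases h : ∃ j : Fin w, (j : ℕ) < t ∧ g j = i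
  · rw [pathOf, if_pos h, Set.indicator_of_mem (by simpa using h), Pi.one_apply]
  · rw [pathOf, if_neg h, Set.indicator_of_notMem (by simpa using h)]

lemma wt_pathOf_add_pathOf (hg : Function.Injective g) {t t' : ℕ} (h : t ≤ t') :
    wt (pathOf g t + pathOf g t') = min w t' - min w t := by
  have hsub : ({j | (j : ℕ) < t} : Finset (Fin w)) ⊆ ({j | (j : ℕ) < t'} : Finset (Fin w)) :=
    fun j hj => by simp only [mem_filter, mem_univ, true_and] at hj ⊢; omega
  rw [pathOf_eq_indicator_one, pathOf_eq_indicator_one, indicator_one_add_indicator_one,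
    ← coe_symmDiff, ← image_symmDiff _ _ hg, wt_indicator_one, card_image_of_injective _ hg,
    symmDiff_of_le hsub, card_sdiff_of_subset hsub, Fin.card_filter_val_lt, Fin.card_filter_val_lt]

lemma wt_pathOf (hg : Function.Injective g) (t : ℕ) : wt (pathOf g t) = min w t := by
  simpa [pathOf_zero] using wt_pathOf_add_pathOf hg (Nat.zero_le t)

lemma pathOf_eq_of_support {s : Fin n → ZMod 2}
    (hsupp : ∀ i, s i ≠ 0 ↔ ∃ j, g j = i) : pathOf g w = s := by
  rw [eq_indicator_one_of_support s (univ.image g) (by simpa using hsupp), pathOf_eq_indicator_one]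
  congr
  ext j
  simp

lemma wt_mulVec_pathOf_le {m : ℕ} (H : Matrix (Fin m) (Fin n) (ZMod 2)) {w_q : ℕ}
    (hcol : ∀ j, wt (fun i => H i j) ≤ w_q) (hg : Function.Injective g)
    (hker : H *ᵥ pathOf g w = 0) {t : ℕ} (ht : t ≤ w) :
    wt (H *ᵥ pathOf g t) ≤ min t (w - t) * w_q := by
  have hfront : wt (H *ᵥ pathOf g t) ≤ t * w_q := by
    simpa [wt_pathOf hg, ht] using wt_mulVec_le_mul H hcol (pathOf g t)
  have hback : wt (H *ᵥ pathOf g t) ≤ (w - t) * w_q :=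
    calc wt (H *ᵥ pathOf g t) = wt (H *ᵥ (pathOf g t + pathOf g w)) := by
          rw [mulVec_add, hker, add_zero]
      _ ≤ wt (pathOf g t + pathOf g w) * w_q := wt_mulVec_le_mul H hcol _
      _ = (w - t) * w_q := by rw [wt_pathOf_add_pathOf hg ht, min_self, min_eq_right ht]
  rw [← Nat.mul_min_mul_right]
  exact le_min hfront hback

end PartialSumPath

lemma eb_le_of_path {α β : Type*} [Fintype α] [Fintype β] (H : Matrix α β (ZMod 2))
    {s : β → ZMod 2} {F B : ℕ} (v : ℕ → β → ZMod 2) (h0 : v 0 = 0) (hF : v F = s)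
    (hflip : ∀ t < F, wt (v t + v (t + 1)) ≤ 1) (henergy : ∀ t ≤ F, wt (H *ᵥ v t) ≤ B) :
    eb H s ≤ B :=
  Nat.sInf_le ⟨F, fun i => v i, h0, hF, fun i => hflip i i.isLt,
    fun i => henergy i (Nat.lt_succ_iff.mp i.isLt)⟩

theorem stmt18_general {m n w : ℕ} (H : Matrix (Fin m) (Fin n) (ZMod 2)) (w_q : ℕ)
    (hcol : ∀ j, wt (fun i => H i j) ≤ w_q)
    (s : Fin n → ZMod 2) (hs : H.mulVec s = 0)
    (g : Fin w → Fin n) (hg : StrictMono g)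
    (hsupp : ∀ i, s i ≠ 0 ↔ ∃ j, g j = i) :
    pathOf g 0 = 0 ∧ pathOf g w = s ∧
    (∀ t < w, wt (pathOf g t + pathOf g (t + 1)) ≤ 1) ∧
    (∀ t ≤ w, wt (H.mulVec (pathOf g t)) ≤ min t (w - t) * w_q) ∧
    eb H s ≤ (w / 2) * w_q := by
  have hinj := hg.injective
  have hW : pathOf g w = s := pathOf_eq_of_support hsupp
  have hflip : ∀ t < w, wt (pathOf g t + pathOf g (t + 1)) ≤ 1 := fun t _ => by
    rw [wt_pathOf_add_pathOf hinj t.le_succ]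
    omega
  have henergy : ∀ t ≤ w, wt (H *ᵥ pathOf g t) ≤ min t (w - t) * w_q :=
    fun t ht => wt_mulVec_pathOf_le H hcol hinj (hW ▸ hs) ht
  refine ⟨pathOf_zero g, hW, hflip, henergy, eb_le_of_path H _ (pathOf_zero g) hW hflip ?_⟩
  exact fun t ht => (henergy t ht).trans (Nat.mul_le_mul_right _ (by omega))

theorem stmt18 {m n w : ℕ} (H : Matrix (Fin m) (Fin n) (ZMod 2)) (w_q : ℕ)
    (hcol : ∀ j, wt (fun i => H i j) ≤ w_q)
    (s : Fin n → ZMod 2) (hs : H.mulVec s = 0) (hw : wt s = w)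
    (g : Fin w → Fin n) (hg : StrictMono g)
    (hsupp : ∀ i, s i ≠ 0 ↔ ∃ j, g j = i) :
    pathOf g 0 = 0 ∧ pathOf g w = s ∧
    (∀ t < w, wt (pathOf g t + pathOf g (t + 1)) ≤ 1) ∧
    (∀ t ≤ w, wt (H.mulVec (pathOf g t)) ≤ min t (w - t) * w_q) ∧
    eb H s ≤ (w / 2) * w_q :=
  stmt18_general H w_q hcol s hs g hg hsupp
end
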